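/- arXiv:2605.09277 — 5 statements merged into one kernel-verified Lean document; each statement's English description precedes it below -/
import Mathlib

section
/- Let N ≥ 2 and T ≥ 1 be integers. For each a ∈ {1,…,N} let (X_{a,s})_{s≥1} be an i.i.d. sequence of random variables taking values in [0,1] with mean r_a, and let r̂_{a,s} := (1/s)·∑_{j=1}^{s} X_{a,j} for s ≥ 1 and r̂_{a,0} := 0. Then ∑_{t=1}^{T} Pr( ∃ a ∈ {1,…,N}, ∃ s ∈ {0,1,…,t−1} : |r_a − r̂_{a,s}| > √(3·ln(N·t)/(s+1)) ) ≤ π²/3. -/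
/-!
Fix a round `t`. By a union bound over the `N` arms and the `t` possible sample counts, the
probability of the bad event is at most `N t` times the largest single deviation probability.
For `s ≥ 1` samples, Hoeffding's inequality bounds it by
`2 exp(-2 s · 3 log(N t) / (s + 1)) ≤ 2 exp(-3 log(N t)) = 2 / (N t)³`, and for `s = 0` the event
is empty since the radius `√(3 log (N t))` exceeds `1 ≥ |r_a|`. Round `t` thus contributes at most
`2 / (N t)² ≤ 2 / t²`, and `∑ 2 / t² ≤ 2 ζ(2) = π² / 3`.
-/

open MeasureTheory ProbabilityTheory Finset Real

section Hoeffding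

variable {Ω : Type*} [MeasurableSpace Ω] {P : Measure Ω} [IsProbabilityMeasure P]
  {Y : ℕ → Ω → ℝ} {a b μ : ℝ}

lemma measureReal_le_abs_sum_range_sub_le (hmeas : ∀ i, Measurable (Y i))
    (hindep : iIndepFun Y P) (hval : ∀ i, ∀ᵐ ω ∂P, Y i ω ∈ Set.Icc a b)
    (hmean : ∀ i, P[Y i] = μ) (n : ℕ) {ε : ℝ} (hε : 0 ≤ ε) :
    P.real {ω | ε ≤ |∑ i ∈ range n, Y i ω - n * μ|}
      ≤ 2 * exp (-2 * ε ^ 2 / (n * (b - a) ^ 2)) := by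
  set c : NNReal := (‖b - a‖₊ / 2) ^ 2
  have hc : (c : ℝ) = (b - a) ^ 2 / 4 := by
    simp only [c, NNReal.coe_pow, NNReal.coe_div, coe_nnnorm, Real.norm_eq_abs]
    rw [div_pow, sq_abs]; norm_num
  have hsub : ∀ i, HasSubgaussianMGF (fun ω ↦ Y i ω - μ) c P := fun i ↦
    hmean i ▸ hasSubgaussianMGF_of_mem_Icc (hmeas i).aemeasurable (hval i)
  have hupper : P.real {ω | ε ≤ ∑ i ∈ range n, (Y i ω - μ)} ≤ exp (-ε ^ 2 / (2 * n * c)) :=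
    HasSubgaussianMGF.measure_sum_range_ge_le_of_iIndepFun
      (hindep.comp (fun _ x ↦ x - μ) fun _ ↦ by fun_prop) (fun i _ ↦ hsub i) hε
  have hlower : P.real {ω | ε ≤ ∑ i ∈ range n, -(Y i ω - μ)} ≤ exp (-ε ^ 2 / (2 * n * c)) :=
    HasSubgaussianMGF.measure_sum_range_ge_le_of_iIndepFun
      (hindep.comp (fun _ x ↦ -(x - μ)) fun _ ↦ by fun_prop) (fun i _ ↦ (hsub i).neg) hε
  have hcentered : ∀ ω, ∑ i ∈ range n, (Y i ω - μ) = ∑ i ∈ range n, Y i ω - n * μ := by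
    simp [sum_sub_distrib]
  have hexp : exp (-ε ^ 2 / (2 * n * c)) = exp (-2 * ε ^ 2 / (n * (b - a) ^ 2)) := by
    rw [hc, show (2 : ℝ) * n * ((b - a) ^ 2 / 4) = n * (b - a) ^ 2 / 2 by ring,
      div_div_eq_mul_div]
    ring_nf
  calc P.real {ω | ε ≤ |∑ i ∈ range n, Y i ω - n * μ|}
      ≤ P.real ({ω | ε ≤ ∑ i ∈ range n, (Y i ω - μ)}
          ∪ {ω | ε ≤ ∑ i ∈ range n, -(Y i ω - μ)}) := by
        refine measureReal_mono (fun ω hω ↦ ?_)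
        simp only [Set.mem_ofPred_eq, Set.mem_union, sum_neg_distrib, hcentered] at hω ⊢
        rcases le_abs'.mp hω with h | h
        · right; linarith
        · left; exact h
    _ ≤ exp (-ε ^ 2 / (2 * n * c)) + exp (-ε ^ 2 / (2 * n * c)) :=
        (measureReal_union_le _ _).trans (add_le_add hupper hlower)
    _ = 2 * exp (-2 * ε ^ 2 / (n * (b - a) ^ 2)) := by rw [hexp]; ring

lemma measureReal_lt_abs_sub_average_le (hmeas : ∀ i, Measurable (Y i))
    (hindep : iIndepFun Y P) (hval : ∀ i, ∀ᵐ ω ∂P, Y i ω ∈ Set.Icc a b)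
    (hmean : ∀ i, P[Y i] = μ) {n : ℕ} (hn : 0 < n) {δ : ℝ} (hδ : 0 ≤ δ) :
    P.real {ω | δ < |μ - (∑ i ∈ range n, Y i ω) / n|}
      ≤ 2 * exp (-2 * n * δ ^ 2 / (b - a) ^ 2) := by
  have hn' : (0 : ℝ) < n := Nat.cast_pos.mpr hn
  have hdev : ∀ ω, n * |μ - (∑ i ∈ range n, Y i ω) / n| = |∑ i ∈ range n, Y i ω - n * μ| := by
    intro ω
    rw [← abs_of_pos hn', ← abs_mul, abs_of_pos hn', abs_sub_comm, mul_sub,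
      mul_div_cancel₀ _ hn'.ne']
  calc P.real {ω | δ < |μ - (∑ i ∈ range n, Y i ω) / n|}
      ≤ P.real {ω | n * δ ≤ |∑ i ∈ range n, Y i ω - n * μ|} := by
        refine measureReal_mono (fun ω hω ↦ ?_)
        simp only [Set.mem_ofPred_eq, ← hdev] at hω ⊢
        exact (mul_lt_mul_of_pos_left hω hn').le
    _ ≤ 2 * exp (-2 * (n * δ) ^ 2 / (n * (b - a) ^ 2)) :=
        measureReal_le_abs_sum_range_sub_le hmeas hindep hval hmean n (by positivity)
    _ = 2 * exp (-2 * n * δ ^ 2 / (b - a) ^ 2) := by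
        rw [show -2 * (n * δ) ^ 2 = n * (-2 * n * δ ^ 2) by ring, mul_div_mul_left _ _ hn'.ne']

lemma measureReal_radius_lt_abs_sub_average_le (hmeas : ∀ i, Measurable (Y i))
    (hindep : iIndepFun Y P) (hval : ∀ i, ∀ᵐ ω ∂P, Y i ω ∈ Set.Icc 0 1)
    (hmean : ∀ i, P[Y i] = μ) (n : ℕ) {x : ℝ} (hx : 2 ≤ x) :
    P.real {ω | √(3 * log x / (n + 1)) < |μ - (∑ i ∈ range n, Y i ω) / n|} ≤ 2 / x ^ 3 := by
  have hlog : log 2 ≤ log x := log_le_log (by norm_num) hx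
  have hlog0 : 0 ≤ log x := (log_nonneg (by norm_num)).trans hlog
  rcases n.eq_zero_or_pos with rfl | hn
  · have hμ : |μ| ≤ 1 := by
      have := norm_integral_le_of_norm_le_const (μ := P) (f := Y 0) (C := 1) <| by
        filter_upwards [hval 0] with ω hω
        exact abs_le.mpr ⟨by linarith [hω.1], hω.2⟩
      simpa [hmean 0] using this
    -- with no samples the average is the junk value `0 / 0 = 0`, and the radius exceeds `1`
    have hempty : {ω | √(3 * log x / ((0 : ℕ) + 1))
        < |μ - (∑ i ∈ range 0, Y i ω) / (0 : ℕ)|} = ∅ := by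
      refine Set.eq_empty_of_forall_notMem fun ω hω ↦ ?_
      simp only [Set.mem_ofPred_eq, Nat.cast_zero, zero_add, div_one, range_zero, sum_empty,
        div_zero, sub_zero] at hω
      have : 1 < √(3 * log x) := (lt_sqrt zero_le_one).mpr (by linarith [log_two_gt_d9])
      linarith
    rw [hempty, measureReal_empty]
    positivity
  · set δ := √(3 * log x / (n + 1))
    have hn' : (1 : ℝ) ≤ n := by exact_mod_cast hn
    have hδ : δ ^ 2 = 3 * log x / (n + 1) := sq_sqrt (by positivity)
    calc P.real {ω | δ < |μ - (∑ i ∈ range n, Y i ω) / n|}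
        ≤ 2 * exp (-2 * n * δ ^ 2 / (1 - 0) ^ 2) :=
          measureReal_lt_abs_sub_average_le hmeas hindep hval hmean hn (sqrt_nonneg _)
      _ ≤ 2 * exp (-3 * log x) := by
          gcongr
          rw [hδ, sub_zero, one_pow, div_one, mul_div_assoc', div_le_iff₀ (by positivity)]
          nlinarith
      _ = 2 / x ^ 3 := by
          rw [neg_mul, exp_neg, show (3 : ℝ) = (3 : ℕ) by norm_num, ← log_pow,
            exp_log (by positivity), div_eq_mul_inv]

end Hoeffding

lemma measureReal_exists_exists_le {Ω ι κ : Type*} [MeasurableSpace Ω] {P : Measure Ω}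
    (p : ι → κ → Ω → Prop) (I : Finset ι) (J : Finset κ) {c : ℝ}
    (h : ∀ a ∈ I, ∀ s ∈ J, P.real {ω | p a s ω} ≤ c) :
    P.real {ω | ∃ a ∈ I, ∃ s ∈ J, p a s ω} ≤ #I * #J * c := by
  calc P.real {ω | ∃ a ∈ I, ∃ s ∈ J, p a s ω}
      = P.real (⋃ a ∈ I, ⋃ s ∈ J, {ω | p a s ω}) := by congr 1; ext; simp
    _ ≤ ∑ a ∈ I, ∑ s ∈ J, P.real {ω | p a s ω} :=
        (measureReal_biUnion_finset_le _ _).trans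
          (sum_le_sum fun a _ ↦ measureReal_biUnion_finset_le _ _)
    _ ≤ ∑ a ∈ I, ∑ s ∈ J, c := sum_le_sum fun a ha ↦ sum_le_sum fun s hs ↦ h a ha s hs
    _ = #I * #J * c := by simp [mul_assoc]

lemma sum_Icc_two_div_sq_le (T : ℕ) : ∑ t ∈ Icc 1 T, 2 / (t : ℝ) ^ 2 ≤ π ^ 2 / 3 := by
  calc ∑ t ∈ Icc 1 T, 2 / (t : ℝ) ^ 2 = 2 * ∑ t ∈ Icc 1 T, 1 / (t : ℝ) ^ 2 := by
        rw [mul_sum]; simp_rw [mul_one_div]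
    _ ≤ 2 * (π ^ 2 / 6) := by
        gcongr
        exact sum_le_hasSum _ (fun _ _ ↦ by positivity) hasSum_zeta_two
    _ = π ^ 2 / 3 := by ring

theorem stmt1_general {Ω : Type*} [MeasurableSpace Ω] (P : Measure Ω) [IsProbabilityMeasure P]
    (N T : ℕ) (hN : 2 ≤ N)
    (X : ℕ → ℕ → Ω → ℝ) (r : ℕ → ℝ)
    (hmeas : ∀ a ∈ Finset.Icc 1 N, ∀ s, Measurable (X a (s + 1)))
    (hindep : ∀ a ∈ Finset.Icc 1 N,
      iIndepFun (fun s : ℕ => X a (s + 1)) P)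
    (hval : ∀ a ∈ Finset.Icc 1 N, ∀ s : ℕ, ∀ ω, X a (s + 1) ω ∈ Set.Icc (0 : ℝ) 1)
    (hmean : ∀ a ∈ Finset.Icc 1 N, ∀ s : ℕ, ∫ ω, X a (s + 1) ω ∂P = r a)
    -- empirical mean of the first `s` samples; for `s = 0` this is `0` (division by zero)
    (rhat : ℕ → ℕ → Ω → ℝ)
    (hrhat : ∀ a s ω, rhat a s ω = (∑ j ∈ Finset.Icc 1 s, X a j ω) / (s : ℝ)) :
    ∑ t ∈ Finset.Icc 1 T,
        (P {ω | ∃ a ∈ Finset.Icc 1 N, ∃ s ∈ Finset.range t,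
          Real.sqrt (3 * Real.log ((N : ℝ) * t) / ((s : ℝ) + 1)) < |r a - rhat a s ω|}).toReal
      ≤ Real.pi ^ 2 / 3 := by
  have hrhat' : ∀ a s ω, rhat a s ω = (∑ i ∈ range s, X a (i + 1) ω) / s := fun a s ω ↦ by
    rw [hrhat, range_eq_Ico, sum_Ico_add' (X a · ω) 0 s 1]; rfl
  have hround : ∀ t ∈ Icc 1 T, (P {ω | ∃ a ∈ Icc 1 N, ∃ s ∈ range t,
      √(3 * log ((N : ℝ) * t) / ((s : ℝ) + 1)) < |r a - rhat a s ω|}).toReal ≤ 2 / (t : ℝ) ^ 2 := by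
    intro t ht
    have hN' : (2 : ℝ) ≤ N := by exact_mod_cast hN
    have ht' : (1 : ℝ) ≤ t := by exact_mod_cast (mem_Icc.mp ht).1
    have hNt : (2 : ℝ) ≤ N * t := by nlinarith
    calc (P _).toReal ≤ #(Icc 1 N) * #(range t) * (2 / (N * t) ^ 3) :=
          measureReal_exists_exists_le _ _ _ fun a ha s _ ↦ by
            simpa only [hrhat'] using measureReal_radius_lt_abs_sub_average_le (hmeas a ha)
              (hindep a ha) (fun s ↦ ae_of_all _ (hval a ha s)) (hmean a ha) s hNt
      _ = 2 / (N * t) ^ 2 := by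
          simp only [Nat.card_Icc, add_tsub_cancel_right, card_range]
          field_simp
      _ ≤ 2 / t ^ 2 := by gcongr; nlinarith
  exact (sum_le_sum hround).trans (sum_Icc_two_div_sq_le T)

/-- For `N ≥ 2`, `T ≥ 1` and, for each arm `a ∈ {1,…,N}`, an i.i.d. sequence
`(X a s)_{s ≥ 1}` of `[0,1]`-valued random variables with mean `r a`, letting
`r̂_{a,s} = (1/s) ∑_{j=1}^s X a j` (with `r̂_{a,0} = 0`), we have
`∑_{t=1}^T Pr(∃ a ∈ {1,…,N}, ∃ s ∈ {0,…,t−1} : |r a − r̂_{a,s}| > √(3 ln(N t)/(s+1))) ≤ π²/3`. -/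
theorem stmt1 {Ω : Type*} [MeasurableSpace Ω] (P : Measure Ω) [IsProbabilityMeasure P]
    (N T : ℕ) (hN : 2 ≤ N) (hT : 1 ≤ T)
    (X : ℕ → ℕ → Ω → ℝ) (r : ℕ → ℝ)
    (hmeas : ∀ a ∈ Finset.Icc 1 N, ∀ s, Measurable (X a (s + 1)))
    (hindep : ∀ a ∈ Finset.Icc 1 N,
      iIndepFun (fun s : ℕ => X a (s + 1)) P)
    (hident : ∀ a ∈ Finset.Icc 1 N, ∀ s : ℕ,
      IdentDistrib (X a (s + 1)) (X a 1) P P)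
    (hval : ∀ a ∈ Finset.Icc 1 N, ∀ s : ℕ, ∀ ω, X a (s + 1) ω ∈ Set.Icc (0 : ℝ) 1)
    (hmean : ∀ a ∈ Finset.Icc 1 N, ∀ s : ℕ, ∫ ω, X a (s + 1) ω ∂P = r a)
    -- empirical mean of the first `s` samples; for `s = 0` this is `0` (division by zero)
    (rhat : ℕ → ℕ → Ω → ℝ)
    (hrhat : ∀ a s ω, rhat a s ω = (∑ j ∈ Finset.Icc 1 s, X a j ω) / (s : ℝ)) :
    ∑ t ∈ Finset.Icc 1 T,
        (P {ω | ∃ a ∈ Finset.Icc 1 N, ∃ s ∈ Finset.range t,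
          Real.sqrt (3 * Real.log ((N : ℝ) * t) / ((s : ℝ) + 1)) < |r a - rhat a s ω|}).toReal
      ≤ Real.pi ^ 2 / 3 :=
  stmt1_general P N T hN X r hmeas hindep hval hmean rhat hrhat
end

section
/- Let m ≥ 1 and t ≥ 4 be integers with t² ≥ m, and let γ > 0. Let A* be a finite set of arms with |A*| ≤ m. For each a ∈ A* let (X_{a,s})_{s≥1} be an i.i.d. sequence in [0,1] with mean r_a, let n_a be any random variable taking values in {0,1,…,t−1}, and let r̂_a denote the empirical mean of the first n_a samples of arm a (with r̂_a := 0 if n_a = 0). Let w be a standard Gaussian N(0,1) random variable independent of all the reward sequences and counts, and set r̄_a := r̂_a + w·√(γ·ln(t)/(n_a + 1)). Then Pr( ∑_{a∈A*} r̄_a ≥ ∑_{a∈A*} r_a ) ≥ (1/2)·Φ(−√(4/γ)). -/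
/-!
For an arm and a sample size `1 ≤ s < t`, Hoeffding's inequality bounds the probability that the
empirical mean of `s` samples falls `√(4 ln t / (s + 1))` or more below the mean by
`exp (-8 s ln t / (s + 1)) ≤ t⁻⁴`. A union bound over at most `t²` arms and fewer than `t` sample
sizes leaves an event of probability at least `1 - 1/t ≥ 1/2` on which no such deviation occurs.
It depends only on the rewards, hence is independent of the shared seed `w`. When `w ≥ √(4/γ)`, the
perturbation `w √(γ ln t / (n + 1))` is at least `√(4 ln t / (n + 1))`, so it compensates the
deviation of every arm at once (and exceeds `r ≤ 1` when `n = 0`). The probability is therefore at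
least `Φ(-√(4/γ)) · 1/2`.
-/

open MeasureTheory ProbabilityTheory Finset

/-- The standard normal cumulative distribution function `Φ`. -/
noncomputable def stdGaussianCdf (x : ℝ) : ℝ :=
  ((ProbabilityTheory.gaussianReal 0 1) (Set.Iic x)).toReal

open Real

/-- Samples are indexed from `1`; the mean of no samples is `0` (division by zero). -/
noncomputable def empiricalMean (x : ℕ → ℝ) (s : ℕ) : ℝ := (∑ j ∈ Icc 1 s, x j) / s

lemma measurable_empiricalMean (s : ℕ) : Measurable fun x : ℕ → ℝ => empiricalMean x s := by
  unfold empiricalMean; fun_prop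

lemma sum_sub_eq_mul_sub_empiricalMean (x : ℕ → ℝ) (r : ℝ) {s : ℕ} (hs : s ≠ 0) :
    ∑ i ∈ range s, (r - x (i + 1)) = s * (r - empiricalMean x s) := by
  have hsum : ∑ j ∈ Icc 1 s, x j = ∑ i ∈ range s, x (i + 1) := by
    rw [range_eq_Ico, sum_Ico_add' x 0 s 1]; rfl
  rw [empiricalMean, hsum, sum_sub_distrib, sum_const, card_range, nsmul_eq_mul]
  field_simp

lemma le_empiricalMean_add_mul_sqrt {x : ℕ → ℝ} {r γ L w : ℝ} {k : ℕ} (hγ : 0 < γ)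
    (hL : 1 / 4 ≤ L) (hr : r ≤ 1) (hw : √(4 / γ) ≤ w)
    (hdev : k ≠ 0 → r - empiricalMean x k < √(4 * L / (k + 1))) :
    r ≤ empiricalMean x k + w * √(γ * L / (k + 1)) := by
  have hscale : √(4 / γ) * √(γ * L / (k + 1)) = √(4 * L / (k + 1)) := by
    rw [← sqrt_mul (by positivity)]; congr 1; field_simp
  have hle : √(4 * L / (k + 1)) ≤ w * √(γ * L / (k + 1)) :=
    hscale ▸ mul_le_mul_of_nonneg_right hw (sqrt_nonneg _)
  rcases eq_or_ne k 0 with rfl | hk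
  · have hone : 1 ≤ √(4 * L / (0 + 1)) := one_le_sqrt.2 (by linarith)
    simp only [empiricalMean, Nat.cast_zero, div_zero, zero_add] at hle hone ⊢
    linarith
  · linarith [hdev hk]

def concentrationSet {κ : Type*} (A : Finset κ) (r : κ → ℝ) (t : ℕ) : Set (κ → ℕ → ℝ) :=
  {x | ∀ a ∈ A, ∀ s ∈ Icc 1 (t - 1), r a - empiricalMean (x a) s < √(4 * log t / (s + 1))}

lemma measurableSet_concentrationSet {κ : Type*} (A : Finset κ) (r : κ → ℝ) (t : ℕ) :
    MeasurableSet (concentrationSet A r t) := by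
  have hset : concentrationSet A r t = ⋂ a ∈ A, ⋂ s ∈ Icc 1 (t - 1),
      {x | r a - empiricalMean (x a) s < √(4 * log t / (s + 1))} := by
    ext x
    simp only [concentrationSet, Set.mem_iInter, Set.mem_ofPred_eq]
  rw [hset]
  refine measurableSet_biInter _ fun a _ => measurableSet_biInter _ fun s _ =>
    measurableSet_lt ?_ measurable_const
  exact ((measurable_empiricalMean s).comp (measurable_pi_apply a)).const_sub _

lemma le_empiricalMean_add_mul_sqrt_of_mem_concentrationSet {κ : Type*} {A : Finset κ}
    {r : κ → ℝ} {t : ℕ} {x : κ → ℕ → ℝ} {γ w : ℝ} {a : κ} {k : ℕ} (ht : 2 ≤ t) (hγ : 0 < γ)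
    (hx : x ∈ concentrationSet A r t) (ha : a ∈ A) (hk : k ≤ t - 1) (hr : r a ≤ 1)
    (hw : √(4 / γ) ≤ w) :
    r a ≤ empiricalMean (x a) k + w * √(γ * log t / (k + 1)) := by
  have hL : 1 / 4 ≤ log t := by
    have hlog : log 2 ≤ log t := log_le_log two_pos (by exact_mod_cast ht)
    linarith [log_two_gt_d9]
  exact le_empiricalMean_add_mul_sqrt hγ hL hr hw fun hk0 =>
    hx a ha k (mem_Icc.2 ⟨Nat.one_le_iff_ne_zero.2 hk0, hk⟩)

lemma exp_neg_two_mul_sq_sqrt_le {t : ℝ} (ht : 1 ≤ t) {s : ℕ} (hs : s ≠ 0) :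
    exp (-2 * s * √(4 * log t / (s + 1)) ^ 2) ≤ (t ^ 4)⁻¹ := by
  have hL : 0 ≤ log t := log_nonneg ht
  have hs1 : (1 : ℝ) ≤ s := by exact_mod_cast Nat.one_le_iff_ne_zero.2 hs
  rw [sq_sqrt (by positivity), ← exp_log (by positivity : 0 < t ^ 4), ← exp_neg, log_pow,
    exp_le_exp, mul_div_assoc', div_le_iff₀ (by positivity)]
  push_cast
  nlinarith

lemma card_mul_pred_mul_inv_pow_four_le {k t : ℕ} (hk : k ≤ t ^ 2) (ht : 2 ≤ t) :
    ((k * (t - 1) : ℕ) : ℝ) * ((t : ℝ) ^ 4)⁻¹ ≤ 1 / 2 := by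
  have ht' : (2 : ℝ) ≤ t := by exact_mod_cast ht
  have hkt : ((k * (t - 1) : ℕ) : ℝ) ≤ (t : ℝ) ^ 3 := by
    calc ((k * (t - 1) : ℕ) : ℝ) ≤ ((t ^ 2 * t : ℕ) : ℝ) := by gcongr; omega
      _ = (t : ℝ) ^ 3 := by push_cast; ring
  rw [← div_eq_mul_inv, div_le_iff₀ (by positivity)]
  nlinarith [pow_pos (by positivity : (0 : ℝ) < t) 3]

section

variable {Ω : Type*} [MeasurableSpace Ω] {P : Measure Ω}

lemma measureReal_le_sub_empiricalMean_le [IsProbabilityMeasure P] {X : ℕ → Ω → ℝ} {r : ℝ}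
    (hmeas : ∀ i, AEMeasurable (X (i + 1)) P) (hindep : iIndepFun (fun i => X (i + 1)) P)
    (hval : ∀ i, ∀ᵐ ω ∂P, X (i + 1) ω ∈ Set.Icc 0 1) (hmean : ∀ i, P[X (i + 1)] = r)
    (s : ℕ) {δ : ℝ} (hδ : 0 ≤ δ) :
    P.real {ω | δ ≤ r - empiricalMean (X · ω) s} ≤ exp (-2 * s * δ ^ 2) := by
  rcases eq_or_ne s 0 with rfl | hs
  · simp
  have hsubG : ∀ i, HasSubgaussianMGF (fun ω => r - X (i + 1) ω) ((‖(1 : ℝ) - 0‖₊ / 2) ^ 2) P :=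
    fun i => by
      convert (hasSubgaussianMGF_of_mem_Icc (hmeas i) (hval i)).neg using 1
      ext ω; simp [hmean i]
  have hevent : {ω | δ ≤ r - empiricalMean (X · ω) s}
      = {ω | s * δ ≤ ∑ i ∈ range s, (r - X (i + 1) ω)} := by
    ext ω
    rw [Set.mem_ofPred_eq, Set.mem_ofPred_eq, sum_sub_eq_mul_sub_empiricalMean (X · ω) r hs]
    exact (mul_le_mul_iff_right₀ (by positivity)).symm
  rw [hevent]
  refine (HasSubgaussianMGF.measure_sum_range_ge_le_of_iIndepFun
    (hindep.comp (fun _ x => r - x) fun _ => by fun_prop) (fun i _ => hsubG i)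
    (by positivity)).trans_eq ?_
  congr 1
  norm_num
  field_simp
  ring

lemma one_sub_card_mul_le_measureReal_biInter_compl [IsProbabilityMeasure P] {κ : Type*}
    (s : Finset κ) {B : κ → Set Ω} {p : ℝ} (h : ∀ i ∈ s, P.real (B i) ≤ p) :
    1 - #s * p ≤ P.real (⋂ i ∈ s, (B i)ᶜ) := by
  have hunion : P.real (⋃ i ∈ s, B i) ≤ #s * p :=
    (measureReal_biUnion_finset_le s B).trans <| by simpa using sum_le_sum h
  have hcover : 1 ≤ P.real (⋃ i ∈ s, B i) + P.real (⋂ i ∈ s, (B i)ᶜ) := by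
    rw [← Set.compl_iUnion₂, ← probReal_univ (μ := P), ← Set.union_compl_self (⋃ i ∈ s, B i)]
    exact measureReal_union_le _ _
  linarith

lemma half_le_measureReal_mem_concentrationSet [IsProbabilityMeasure P] {κ : Type*}
    {A : Finset κ} {X : κ → ℕ → Ω → ℝ} {r : κ → ℝ} {t : ℕ} (ht : 2 ≤ t) (hA : #A ≤ t ^ 2)
    (hmeas : ∀ a ∈ A, ∀ i, AEMeasurable (X a (i + 1)) P)
    (hindep : ∀ a ∈ A, iIndepFun (fun i => X a (i + 1)) P)
    (hval : ∀ a ∈ A, ∀ i, ∀ᵐ ω ∂P, X a (i + 1) ω ∈ Set.Icc 0 1)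
    (hmean : ∀ a ∈ A, ∀ i, P[X a (i + 1)] = r a) :
    1 / 2 ≤ P.real {ω | (fun a s => X a s ω) ∈ concentrationSet A r t} := by
  have hbad : ∀ p ∈ A ×ˢ Icc 1 (t - 1),
      P.real {ω | √(4 * log t / (p.2 + 1)) ≤ r p.1 - empiricalMean (X p.1 · ω) p.2}
        ≤ ((t : ℝ) ^ 4)⁻¹ := by
    rintro ⟨a, s⟩ hp
    obtain ⟨ha, hs⟩ := mem_product.1 hp
    have hs0 : s ≠ 0 := by simp only [mem_Icc] at hs; omega
    exact (measureReal_le_sub_empiricalMean_le (hmeas a ha) (hindep a ha) (hval a ha)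
      (hmean a ha) s (sqrt_nonneg _)).trans
      (exp_neg_two_mul_sq_sqrt_le (by exact_mod_cast (by omega : 1 ≤ t)) hs0)
  have hunion := one_sub_card_mul_le_measureReal_biInter_compl _ hbad
  rw [card_product, Nat.card_Icc, Nat.add_sub_cancel] at hunion
  have hevent : {ω | (fun a s => X a s ω) ∈ concentrationSet A r t} = ⋂ p ∈ A ×ˢ Icc 1 (t - 1),
      {ω | √(4 * log t / (p.2 + 1)) ≤ r p.1 - empiricalMean (X p.1 · ω) p.2}ᶜ := by
    ext ω
    simp only [concentrationSet, mem_product, mem_Icc, and_imp, Prod.forall, Set.mem_ofPred_eq,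
      Set.mem_iInter, Set.mem_compl_iff, not_le]
    exact ⟨fun h a s ha => h a ha s, fun h a ha s => h a s ha⟩
  rw [hevent]
  linarith [card_mul_pred_mul_inv_pow_four_le hA ht]

lemma measureReal_preimage_Ici_eq_stdGaussianCdf_neg {w : Ω → ℝ} (hw : Measurable w)
    (hlaw : P.map w = gaussianReal 0 1) (c : ℝ) :
    P.real (w ⁻¹' Set.Ici c) = stdGaussianCdf (-c) := by
  have hsymm : (gaussianReal 0 1).map (fun x => -x) = gaussianReal 0 1 := by
    simpa using gaussianReal_map_neg (μ := 0) (v := 1)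
  have hneg : (fun x : ℝ => -x) ⁻¹' Set.Iic (-c) = Set.Ici c := by ext; simp
  rw [stdGaussianCdf, ← hsymm, Measure.map_apply (by fun_prop) measurableSet_Iic, hneg, ← hlaw,
    Measure.map_apply hw measurableSet_Ici, measureReal_def]

end

theorem stmt3_general {Ω : Type*} [MeasurableSpace Ω] (P : Measure Ω) [IsProbabilityMeasure P]
    {ι : Type*}
    (m t : ℕ) (ht : 4 ≤ t) (htm : m ≤ t ^ 2) (γ : ℝ) (hγ : 0 < γ)
    (Astar : Finset ι) (hcard : Astar.card ≤ m)
    (X : ι → ℕ → Ω → ℝ) (r : ι → ℝ)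
    (hXmeas : ∀ a ∈ Astar, ∀ s, Measurable (X a (s + 1)))
    (hXindep : ∀ a ∈ Astar, iIndepFun (fun s : ℕ => X a (s + 1)) P)
    (hXval : ∀ a ∈ Astar, ∀ s : ℕ, ∀ ω, X a (s + 1) ω ∈ Set.Icc (0 : ℝ) 1)
    (hXmean : ∀ a ∈ Astar, ∀ s : ℕ, ∫ ω, X a (s + 1) ω ∂P = r a)
    (n : ι → Ω → ℕ)
    (hnle : ∀ a ∈ Astar, ∀ ω, n a ω ≤ t - 1)
    -- empirical mean of the first `n a` samples (equal to `0` when `n a = 0`).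
    (rhat : ι → Ω → ℝ)
    (hrhat : ∀ a ω, rhat a ω = (∑ j ∈ Finset.Icc 1 (n a ω), X a j ω) / (n a ω : ℝ))
    -- the single shared Gaussian seed, independent of rewards and counts
    (w : Ω → ℝ)
    (hwmeas : Measurable w)
    (hwlaw : Measure.map w P = ProbabilityTheory.gaussianReal 0 1)
    (hwindep : IndepFun w
      (fun ω => ((fun (a : {x // x ∈ Astar}) (s : ℕ) => X a.1 s ω),
        (fun a : {x // x ∈ Astar} => n a.1 ω))) P)
    -- the perturbed estimates
    (rbar : ι → Ω → ℝ)
    (hrbar : ∀ a ω, rbar a ω =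
      rhat a ω + w ω * Real.sqrt (γ * Real.log t / ((n a ω : ℝ) + 1))) :
    (1 / 2) * stdGaussianCdf (-Real.sqrt (4 / γ))
      ≤ (P {ω | ∑ a ∈ Astar, r a ≤ ∑ a ∈ Astar, rbar a ω}).toReal := by
  have hr : ∀ a ∈ Astar, r a ≤ 1 := fun a ha => by
    have hint := Integrable.of_mem_Icc (μ := P) 0 1 (hXmeas a ha 0).aemeasurable
      (ae_of_all _ (hXval a ha 0))
    simpa [hXmean a ha 0] using integral_mono hint (integrable_const 1) fun ω => (hXval a ha 0 ω).2
  set E := Prod.fst ⁻¹' concentrationSet Astar.attach (fun a => r a.1) t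
  set G := (fun ω => ((fun (a : {x // x ∈ Astar}) (s : ℕ) => X a.1 s ω),
      (fun a : {x // x ∈ Astar} => n a.1 ω))) ⁻¹' E
  have hG : 1 / 2 ≤ P.real G :=
    half_le_measureReal_mem_concentrationSet (A := Astar.attach) (X := fun a => X a.1)
      (by omega) (card_attach.trans_le (hcard.trans htm))
      (fun a _ i => (hXmeas a a.2 i).aemeasurable) (fun a _ => hXindep a a.2)
      (fun a _ i => ae_of_all _ (hXval a a.2 i)) (fun a _ => hXmean a a.2)
  have hindep := hwindep.measure_inter_preimage_eq_mul (Set.Ici √(4 / γ)) E measurableSet_Ici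
    ((measurableSet_concentrationSet _ _ _).preimage measurable_fst)
  have hsub : w ⁻¹' Set.Ici √(4 / γ) ∩ G ⊆ {ω | ∑ a ∈ Astar, r a ≤ ∑ a ∈ Astar, rbar a ω} := by
    rintro ω ⟨hw, hωG⟩
    rw [Set.mem_ofPred_eq]
    refine sum_le_sum fun a ha => ?_
    rw [hrbar, hrhat]
    exact le_empiricalMean_add_mul_sqrt_of_mem_concentrationSet (a := ⟨a, ha⟩) (by omega) hγ hωG
      (mem_attach _ _) (hnle a ha ω) (hr a ha) hw
  calc (1 / 2) * stdGaussianCdf (-√(4 / γ))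
      ≤ P.real (w ⁻¹' Set.Ici √(4 / γ)) * P.real G := by
        rw [measureReal_preimage_Ici_eq_stdGaussianCdf_neg hwmeas hwlaw, mul_comm]
        exact mul_le_mul_of_nonneg_left hG ENNReal.toReal_nonneg
    _ = P.real (w ⁻¹' Set.Ici √(4 / γ) ∩ G) := by
        rw [measureReal_def, measureReal_def, measureReal_def, hindep, ENNReal.toReal_mul]
    _ ≤ _ := measureReal_mono hsub

/-- anti-concentration for CL-SG. Let `m ≥ 1`, `t ≥ 4` with `t² ≥ m`, `γ > 0`,
and let `A*` be a finite set of arms of cardinality at most `m`. Each arm `a` has an i.i.d.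
`[0,1]`-valued reward sequence with mean `r a`, an arbitrary random count `n a ∈ {0,…,t−1}` and
empirical mean `r̂ a` of the first `n a` samples.  Let `w` be a standard Gaussian independent of
all rewards and counts and set `r̄ a = r̂ a + w·√(γ ln t/(n a + 1))`.  Then
`Pr(∑_{a∈A*} r̄ a ≥ ∑_{a∈A*} r a) ≥ (1/2)·Φ(−√(4/γ))`. -/
theorem stmt3 {Ω : Type*} [MeasurableSpace Ω] (P : Measure Ω) [IsProbabilityMeasure P]
    {ι : Type*}
    (m t : ℕ) (hm : 1 ≤ m) (ht : 4 ≤ t) (htm : m ≤ t ^ 2) (γ : ℝ) (hγ : 0 < γ)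
    (Astar : Finset ι) (hcard : Astar.card ≤ m)
    (X : ι → ℕ → Ω → ℝ) (r : ι → ℝ)
    (hXmeas : ∀ a ∈ Astar, ∀ s, Measurable (X a (s + 1)))
    (hXindep : ∀ a ∈ Astar, iIndepFun (fun s : ℕ => X a (s + 1)) P)
    (hXident : ∀ a ∈ Astar, ∀ s : ℕ, IdentDistrib (X a (s + 1)) (X a 1) P P)
    (hXval : ∀ a ∈ Astar, ∀ s : ℕ, ∀ ω, X a (s + 1) ω ∈ Set.Icc (0 : ℝ) 1)
    (hXmean : ∀ a ∈ Astar, ∀ s : ℕ, ∫ ω, X a (s + 1) ω ∂P = r a)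
    (n : ι → Ω → ℕ)
    (hnmeas : ∀ a ∈ Astar, Measurable (n a))
    (hnle : ∀ a ∈ Astar, ∀ ω, n a ω ≤ t - 1)
    -- empirical mean of the first `n a` samples (equal to `0` when `n a = 0`).
    (rhat : ι → Ω → ℝ)
    (hrhat : ∀ a ω, rhat a ω = (∑ j ∈ Finset.Icc 1 (n a ω), X a j ω) / (n a ω : ℝ))
    -- the single shared Gaussian seed, independent of rewards and counts
    (w : Ω → ℝ)
    (hwmeas : Measurable w)
    (hwlaw : Measure.map w P = ProbabilityTheory.gaussianReal 0 1)
    (hwindep : IndepFun w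
      (fun ω => ((fun (a : {x // x ∈ Astar}) (s : ℕ) => X a.1 s ω),
        (fun a : {x // x ∈ Astar} => n a.1 ω))) P)
    -- the perturbed estimates
    (rbar : ι → Ω → ℝ)
    (hrbar : ∀ a ω, rbar a ω =
      rhat a ω + w ω * Real.sqrt (γ * Real.log t / ((n a ω : ℝ) + 1))) :
    (1 / 2) * stdGaussianCdf (-Real.sqrt (4 / γ))
      ≤ (P {ω | ∑ a ∈ Astar, r a ≤ ∑ a ∈ Astar, rbar a ω}).toReal :=
  stmt3_general P m t ht htm γ hγ Astar hcard X r hXmeas hXindep hXval hXmean n hnle rhat hrhat w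
    hwmeas hwlaw hwindep rbar hrbar
end

section
/- Let m, N ≥ 1 and T ≥ 2 be integers and γ > 0. On a probability space, let A_1,…,A_T be random subsets of {1,…,N} with |A_t| ≤ m almost surely, let n_{a,t} := #{τ ∈ {1,…,t−1} : a ∈ A_τ}, and for each t let w_t and w̃_t be independent standard Gaussian N(0,1) random variables (so that w_t − w̃_t is N(0,2)), with arbitrary dependence across different rounds t and with the sets A_t. Then E[ ∑_{t=1}^{T} |w_t − w̃_t| · ∑_{a ∈ A_t} √(γ·ln(t)/(n_{a,t}+1)) ] ≤ 4·ln(T)·√(2·γ·m·N·T). -/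
/-!
Pointwise in `ω`, the weighted AM–GM inequality `|D| S ≤ (c D² + S² / c) / 2` separates the
Gaussian factors `D_t = w_t - w̃_t` from the exploration bonuses `S_t`. By Cauchy–Schwarz over
`A_t`, `S_t² ≤ m γ ln T ∑_{a ∈ A_t} 1 / (n_{a,t} + 1)`; along the rounds in which an arm is
pulled its pull count takes distinct values below `T`, so the double sum is at most
`N (1 + ln T)` deterministically. Since `E[D_t²] ≤ 4`, integrating and optimizing `c` gives
`√(4T · m γ ln T · N (1 + ln T))`, which is at most `4 ln T √(2 γ m N T)` once `ln T ≥ 1/7`.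
-/

open MeasureTheory ProbabilityTheory Finset Real
open scoped NNReal

def pullCount (A : ℕ → Finset ℕ) (a t : ℕ) : ℕ := #{τ ∈ Icc 1 (t - 1) | a ∈ A τ}

section PullCount

variable (A : ℕ → Finset ℕ) {a : ℕ}

lemma pullCount_le_sub_one (t : ℕ) : pullCount A a t ≤ t - 1 :=
  (card_filter_le _ _).trans (by simp)

lemma pullCount_lt_pullCount {t t' : ℕ} (ht : 1 ≤ t) (ha : a ∈ A t) (htt' : t < t') :
    pullCount A a t < pullCount A a t' := by
  refine card_lt_card ((ssubset_iff_of_subset ?_).2 ⟨t, ?_, ?_⟩)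
  · exact filter_subset_filter _ (Icc_subset_Icc le_rfl (by omega))
  · simp only [mem_filter, mem_Icc]; exact ⟨⟨ht, by omega⟩, ha⟩
  · simp only [mem_filter, mem_Icc]; omega

lemma sum_inv_pullCount_add_one_le_harmonic (a T : ℕ) :
    ∑ t ∈ Icc 1 T with a ∈ A t, ((pullCount A a t : ℝ) + 1)⁻¹ ≤ harmonic T := by
  have hinj : Set.InjOn (pullCount A a) ({t ∈ Icc 1 T | a ∈ A t} : Finset ℕ) := by
    refine StrictMonoOn.injOn fun t ht t' _ htt' => ?_
    simp only [coe_filter, mem_Icc] at ht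
    exact pullCount_lt_pullCount A ht.1.1 ht.2 htt'
  have himage : image (pullCount A a) {t ∈ Icc 1 T | a ∈ A t} ⊆ range T := by
    intro k hk
    obtain ⟨t, ht, rfl⟩ := mem_image.1 hk
    simp only [mem_filter, mem_Icc] at ht
    have := pullCount_le_sub_one A (a := a) t
    rw [mem_range]; omega
  calc ∑ t ∈ Icc 1 T with a ∈ A t, ((pullCount A a t : ℝ) + 1)⁻¹
      = ∑ k ∈ image (pullCount A a) {t ∈ Icc 1 T | a ∈ A t}, ((k : ℝ) + 1)⁻¹ :=
        (sum_image (f := fun k : ℕ => ((k : ℝ) + 1)⁻¹) hinj).symm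
    _ ≤ ∑ k ∈ range T, ((k : ℝ) + 1)⁻¹ :=
        sum_le_sum_of_subset_of_nonneg himage fun _ _ _ => by positivity
    _ = harmonic T := by simp [harmonic]

lemma sum_sum_inv_pullCount_add_one_le {N : ℕ} (hA : ∀ t, A t ⊆ Icc 1 N) (T : ℕ) :
    ∑ t ∈ Icc 1 T, ∑ a ∈ A t, ((pullCount A a t : ℝ) + 1)⁻¹ ≤ N * harmonic T := by
  rw [sum_comm' (t' := Icc 1 N) (s' := fun a => {t ∈ Icc 1 T | a ∈ A t})
    fun t a => ⟨fun h => ⟨mem_filter.2 h, hA t h.2⟩, fun h => mem_filter.1 h.1⟩]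
  calc ∑ a ∈ Icc 1 N, ∑ t ∈ Icc 1 T with a ∈ A t, ((pullCount A a t : ℝ) + 1)⁻¹
      ≤ ∑ _a ∈ Icc 1 N, (harmonic T : ℝ) :=
        sum_le_sum fun a _ => sum_inv_pullCount_add_one_le_harmonic A a T
    _ = N * harmonic T := by simp

lemma sum_sq_sum_sqrt_le {m N : ℕ} (hAsub : ∀ t, A t ⊆ Icc 1 N) (hAcard : ∀ t, #(A t) ≤ m)
    {γ : ℝ} (hγ : 0 ≤ γ) (T : ℕ) :
    ∑ t ∈ Icc 1 T, (∑ a ∈ A t, √(γ * log t / ((pullCount A a t : ℝ) + 1))) ^ 2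
      ≤ m * γ * log T * (N * (1 + log T)) := by
  have hround : ∀ t ∈ Icc 1 T, (∑ a ∈ A t, √(γ * log t / ((pullCount A a t : ℝ) + 1))) ^ 2
      ≤ m * γ * log T * ∑ a ∈ A t, ((pullCount A a t : ℝ) + 1)⁻¹ := by
    intro t ht
    obtain ⟨ht1, htT⟩ := mem_Icc.1 ht
    have hlog : log t ≤ log T := log_le_log (by exact_mod_cast ht1) (by exact_mod_cast htT)
    calc (∑ a ∈ A t, √(γ * log t / ((pullCount A a t : ℝ) + 1))) ^ 2
        ≤ #(A t) * ∑ a ∈ A t, √(γ * log t / ((pullCount A a t : ℝ) + 1)) ^ 2 :=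
          sq_sum_le_card_mul_sum_sq
      _ = #(A t) * ∑ a ∈ A t, γ * log t * ((pullCount A a t : ℝ) + 1)⁻¹ := by
          congr 1
          exact sum_congr rfl fun a _ => by rw [sq_sqrt (by positivity), div_eq_mul_inv]
      _ ≤ m * ∑ a ∈ A t, γ * log T * ((pullCount A a t : ℝ) + 1)⁻¹ := by
          gcongr
          exact_mod_cast hAcard t
      _ = m * γ * log T * ∑ a ∈ A t, ((pullCount A a t : ℝ) + 1)⁻¹ := by
          rw [← mul_sum]; ring
  calc ∑ t ∈ Icc 1 T, (∑ a ∈ A t, √(γ * log t / ((pullCount A a t : ℝ) + 1))) ^ 2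
      ≤ ∑ t ∈ Icc 1 T, m * γ * log T * ∑ a ∈ A t, ((pullCount A a t : ℝ) + 1)⁻¹ :=
        sum_le_sum hround
    _ = m * γ * log T * ∑ t ∈ Icc 1 T, ∑ a ∈ A t, ((pullCount A a t : ℝ) + 1)⁻¹ :=
        (mul_sum _ _ _).symm
    _ ≤ m * γ * log T * (N * (1 + log T)) := by
        gcongr
        exact (sum_sum_inv_pullCount_add_one_le A hAsub T).trans
          (by gcongr; exact harmonic_le_one_add_log T)

end PullCount

section Gaussian

variable {Ω : Type*} [MeasurableSpace Ω] {P : Measure Ω}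

lemma ProbabilityTheory.HasLaw.integral_sq_gaussianReal {X : Ω → ℝ} {μ : ℝ} {v : ℝ≥0}
    (hX : HasLaw X (gaussianReal μ v) P) : ∫ ω, X ω ^ 2 ∂P = v + μ ^ 2 := by
  have := hX.isProbabilityMeasure
  have hvar := variance_eq_sub hX.hasGaussianLaw.memLp_two
  rw [hX.variance_eq, variance_id_gaussianReal, hX.integral_eq, integral_id_gaussianReal] at hvar
  simp only [Pi.pow_apply] at hvar
  linarith

lemma integral_sub_sq_le {X Y : Ω → ℝ} (hX : MemLp X 2 P) (hY : MemLp Y 2 P) :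
    ∫ ω, (X ω - Y ω) ^ 2 ∂P ≤ 2 * ∫ ω, X ω ^ 2 ∂P + 2 * ∫ ω, Y ω ^ 2 ∂P := by
  rw [← integral_const_mul, ← integral_const_mul,
    ← integral_add (hX.integrable_sq.const_mul 2) (hY.integrable_sq.const_mul 2)]
  exact integral_mono (hX.sub hY).integrable_sq
    ((hX.integrable_sq.const_mul 2).add (hY.integrable_sq.const_mul 2))
    fun ω => by nlinarith [sq_nonneg (X ω + Y ω)]

lemma ProbabilityTheory.HasLaw.integral_sub_sq_le_four {X Y : Ω → ℝ}
    (hX : HasLaw X (gaussianReal 0 1) P) (hY : HasLaw Y (gaussianReal 0 1) P) :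
    ∫ ω, (X ω - Y ω) ^ 2 ∂P ≤ 4 := by
  have := integral_sub_sq_le hX.hasGaussianLaw.memLp_two hY.hasGaussianLaw.memLp_two
  rw [hX.integral_sq_gaussianReal, hY.integral_sq_gaussianReal] at this
  norm_num at this
  linarith

end Gaussian

lemma mul_le_half_add_sq (x y : ℝ) {c : ℝ} (hc : 0 < c) : x * y ≤ (c * x ^ 2 + y ^ 2 / c) / 2 := by
  have h : 0 ≤ (c * x - y) ^ 2 / c := by positivity
  have : (c * x - y) ^ 2 / c = c * x ^ 2 + y ^ 2 / c - 2 * (x * y) := by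
    field_simp; ring
  linarith

lemma sqrt_div_mul_add_div_sqrt_div {a K : ℝ} (ha : 0 < a) (hK : 0 < K) :
    √(K / a) * a + K / √(K / a) = 2 * √(a * K) := by
  rw [sqrt_div hK.le, sqrt_mul ha.le]
  have : √a ^ 2 = a := sq_sqrt ha.le
  have : 0 < √a := sqrt_pos.2 ha
  have : 0 < √K := sqrt_pos.2 hK
  have : √K ^ 2 = K := sq_sqrt hK.le
  field_simp
  nlinarith

lemma integral_sum_abs_mul_le_sqrt {Ω ι : Type*} [MeasurableSpace Ω] {P : Measure Ω}
    [IsProbabilityMeasure P] (s : Finset ι) {D S : ι → Ω → ℝ} {a K : ℝ}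
    (hD : ∀ i ∈ s, Integrable (fun ω => D i ω ^ 2) P)
    (hDa : ∑ i ∈ s, ∫ ω, D i ω ^ 2 ∂P ≤ a) (hSK : ∀ ω, ∑ i ∈ s, S i ω ^ 2 ≤ K)
    (ha : 0 < a) (hK : 0 < K) :
    ∫ ω, ∑ i ∈ s, |D i ω| * S i ω ∂P ≤ √(a * K) := by
  set c := √(K / a)
  have hc : 0 < c := sqrt_pos.2 (div_pos hK ha)
  have hg : Integrable (fun ω => (c * ∑ i ∈ s, D i ω ^ 2 + K / c) / 2) P :=
    (((integrable_finsetSum s hD).const_mul c).add (integrable_const _)).div_const 2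
  have hpointwise : ∀ ω, ∑ i ∈ s, |D i ω| * S i ω ≤ (c * ∑ i ∈ s, D i ω ^ 2 + K / c) / 2 :=
    fun ω => calc
      ∑ i ∈ s, |D i ω| * S i ω ≤ ∑ i ∈ s, (c * D i ω ^ 2 + S i ω ^ 2 / c) / 2 :=
        sum_le_sum fun i _ => sq_abs (D i ω) ▸ mul_le_half_add_sq _ _ hc
      _ = (c * ∑ i ∈ s, D i ω ^ 2 + (∑ i ∈ s, S i ω ^ 2) / c) / 2 := by
        rw [← sum_div, sum_add_distrib, mul_sum, sum_div]
      _ ≤ (c * ∑ i ∈ s, D i ω ^ 2 + K / c) / 2 := by gcongr; exact hSK ω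
  by_cases hf : Integrable (fun ω => ∑ i ∈ s, |D i ω| * S i ω) P
  swap
  · rw [integral_undef hf]; positivity
  calc ∫ ω, ∑ i ∈ s, |D i ω| * S i ω ∂P
      ≤ ∫ ω, (c * ∑ i ∈ s, D i ω ^ 2 + K / c) / 2 ∂P := integral_mono hf hg hpointwise
    _ = (c * ∑ i ∈ s, ∫ ω, D i ω ^ 2 ∂P + K / c) / 2 := by
      rw [integral_div, integral_add ((integrable_finsetSum s hD).const_mul c) (integrable_const _),
        integral_const_mul, integral_finsetSum s hD]
      simp
    _ ≤ (c * a + K / c) / 2 := by gcongr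
    _ = √(a * K) := by rw [sqrt_div_mul_add_div_sqrt_div ha hK]; ring

lemma sqrt_four_mul_mul_one_add_le {x L : ℝ} (hx : 0 ≤ x) (hL : 1 / 7 ≤ L) :
    √(4 * x * L * (1 + L)) ≤ 4 * L * √(2 * x) := by
  rw [← sqrt_sq (by linarith : 0 ≤ 4 * L), ← sqrt_mul (sq_nonneg _)]
  refine sqrt_le_sqrt ?_
  have : 0 ≤ x * L * (7 * L - 1) := mul_nonneg (mul_nonneg hx (by linarith)) (by linarith)
  nlinarith

theorem stmt7_general {Ω : Type*} [MeasurableSpace Ω] (P : Measure Ω) [IsProbabilityMeasure P]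
    (m N T : ℕ) (hm : 1 ≤ m) (hN : 1 ≤ N) (hT : 2 ≤ T) (γ : ℝ) (hγ : 0 < γ)
    (A : ℕ → Ω → Finset ℕ)
    (hAsub : ∀ t ω, A t ω ⊆ Finset.Icc 1 N)
    (hAcard : ∀ t ω, (A t ω).card ≤ m)
    (n : ℕ → ℕ → Ω → ℕ)
    (hn : ∀ a t ω, n a t ω = ((Finset.Icc 1 (t - 1)).filter (fun τ => a ∈ A τ ω)).card)
    (w wt : ℕ → Ω → ℝ)
    (hwmeas : ∀ t, Measurable (w t)) (hwtmeas : ∀ t, Measurable (wt t))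
    (hwlaw : ∀ t ∈ Finset.Icc 1 T, Measure.map (w t) P = ProbabilityTheory.gaussianReal 0 1)
    (hwtlaw : ∀ t ∈ Finset.Icc 1 T, Measure.map (wt t) P = ProbabilityTheory.gaussianReal 0 1) :
    ∫ ω, ∑ t ∈ Finset.Icc 1 T, |w t ω - wt t ω| *
        ∑ a ∈ A t ω, Real.sqrt (γ * Real.log t / ((n a t ω : ℝ) + 1)) ∂P
      ≤ 4 * Real.log T * Real.sqrt (2 * γ * m * N * T) := by
  obtain rfl : n = fun a t ω => pullCount (fun τ => A τ ω) a t :=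
    funext fun a => funext fun t => funext fun ω => hn a t ω
  have hw : ∀ t ∈ Icc 1 T, HasLaw (w t) (gaussianReal 0 1) P :=
    fun t ht => ⟨(hwmeas t).aemeasurable, hwlaw t ht⟩
  have hwt : ∀ t ∈ Icc 1 T, HasLaw (wt t) (gaussianReal 0 1) P :=
    fun t ht => ⟨(hwtmeas t).aemeasurable, hwtlaw t ht⟩
  have hD : ∀ t ∈ Icc 1 T, Integrable (fun ω => (w t ω - wt t ω) ^ 2) P := fun t ht =>
    ((hw t ht).hasGaussianLaw.memLp_two.sub (hwt t ht).hasGaussianLaw.memLp_two).integrable_sq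
  have hDsum : ∑ t ∈ Icc 1 T, ∫ ω, (w t ω - wt t ω) ^ 2 ∂P ≤ 4 * T :=
    (sum_le_sum fun t ht => (hw t ht).integral_sub_sq_le_four (hwt t ht)).trans
      (by simp [mul_comm])
  have hL : 1 / 7 ≤ log T :=
    (by linarith [log_two_gt_d9] : (1 / 7 : ℝ) ≤ log 2).trans
      (log_le_log two_pos (by exact_mod_cast hT))
  have hm' : (0 : ℝ) < m := by exact_mod_cast hm
  have hN' : (0 : ℝ) < N := by exact_mod_cast hN
  have hK : 0 < m * γ * log T * (N * (1 + log T)) := by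
    have : 0 < log T := by linarith
    positivity
  calc _ ≤ √(4 * T * (m * γ * log T * (N * (1 + log T)))) :=
        integral_sum_abs_mul_le_sqrt (Icc 1 T) (D := fun t ω => w t ω - wt t ω)
          (S := fun t ω => ∑ a ∈ A t ω, √(γ * log t / ((pullCount (fun τ => A τ ω) a t : ℝ) + 1)))
          hD hDsum
          (fun ω => sum_sq_sum_sqrt_le _ (fun t => hAsub t ω) (fun t => hAcard t ω) hγ.le T)
          (by positivity) hK
    _ = √(4 * (γ * m * N * T) * log T * (1 + log T)) := by ring_nf
    _ ≤ 4 * log T * √(2 * (γ * m * N * T)) := sqrt_four_mul_mul_one_add_le (by positivity) hL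
    _ = 4 * log T * √(2 * γ * m * N * T) := by ring_nf

/-- Step 3 of the optimism bound for CL-SG. Let `m, N ≥ 1`, `T ≥ 2`, `γ > 0`.
For random subsets `A t` of `{1,…,N}` of cardinality at most `m`, pull counts
`n a t = #{τ ∈ {1,…,t−1} : a ∈ A τ}`, and per-round independent standard Gaussian seeds
`w t`, `w̃ t` (arbitrary dependence across rounds and with the sets),
`E[∑_{t=1}^T |w t − w̃ t| ∑_{a∈A t} √(γ ln t/(n a t + 1))] ≤ 4·ln T·√(2 γ m N T)`. -/
theorem stmt7 {Ω : Type*} [MeasurableSpace Ω] (P : Measure Ω) [IsProbabilityMeasure P]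
    (m N T : ℕ) (hm : 1 ≤ m) (hN : 1 ≤ N) (hT : 2 ≤ T) (γ : ℝ) (hγ : 0 < γ)
    (A : ℕ → Ω → Finset ℕ)
    (hAmeas : ∀ a t, MeasurableSet {ω | a ∈ A t ω})
    (hAsub : ∀ t ω, A t ω ⊆ Finset.Icc 1 N)
    (hAcard : ∀ t ω, (A t ω).card ≤ m)
    (n : ℕ → ℕ → Ω → ℕ)
    (hn : ∀ a t ω, n a t ω = ((Finset.Icc 1 (t - 1)).filter (fun τ => a ∈ A τ ω)).card)
    (w wt : ℕ → Ω → ℝ)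
    (hwmeas : ∀ t, Measurable (w t)) (hwtmeas : ∀ t, Measurable (wt t))
    (hwlaw : ∀ t ∈ Finset.Icc 1 T, Measure.map (w t) P = ProbabilityTheory.gaussianReal 0 1)
    (hwtlaw : ∀ t ∈ Finset.Icc 1 T, Measure.map (wt t) P = ProbabilityTheory.gaussianReal 0 1)
    (hindep : ∀ t ∈ Finset.Icc 1 T, IndepFun (w t) (wt t) P) :
    ∫ ω, ∑ t ∈ Finset.Icc 1 T, |w t ω - wt t ω| *
        ∑ a ∈ A t ω, Real.sqrt (γ * Real.log t / ((n a t ω : ℝ) + 1)) ∂P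
      ≤ 4 * Real.log T * Real.sqrt (2 * γ * m * N * T) :=
  stmt7_general P m N T hm hN hT γ hγ A hAsub hAcard n hn w wt hwmeas hwtmeas hwlaw hwtlaw
end

section
/- Let m, T, t be positive integers, let c₁ := 10⁻⁶, c₂ := 15/16, α := 255/256 + c₁, N := 2m, and suppose α·T + 1 ≤ t ≤ T. Let G ⊆ {1,…,N} with |G| = m and let n : {1,…,N} → ℕ satisfy n_a ≤ t − 1 for every a, ∑_{a=1}^{N} n_a = m·(t−1), and #{ a ∈ G : n_a > t − 1 − c₁·T } ≥ 0.9995·m. Then #{ b ∈ {1,…,N}∖G : n_b ≤ t − 1 − c₂·T } > 0.92·m. -/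
open Finset

/-- Case 2 counting lemma, CL-SG lower bound. With `N = 2m`, `c₁ = 10⁻⁶`,
`c₂ = 15/16`, `α = 255/256 + c₁`, `α·T + 1 ≤ t ≤ T`, `G ⊆ {1,…,2m}` of size `m`, pull counts
`n a ≤ t − 1` summing to `m(t−1)`, and at least `0.9995·m` optimal arms with
`n a > t − 1 − c₁·T`: then more than `0.92·m` suboptimal arms satisfy `n b ≤ t − 1 − c₂·T`. -/
theorem stmt17 (m T t : ℕ) (hm : 0 < m) (hT : 0 < T) (ht : 0 < t)
    (htlow : ((255 / 256 : ℝ) + 1 / 10 ^ 6) * T + 1 ≤ (t : ℝ)) (htup : t ≤ T)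
    (G : Finset ℕ) (hGsub : G ⊆ Finset.Icc 1 (2 * m)) (hGcard : G.card = m)
    (n : ℕ → ℕ)
    (hle : ∀ a ∈ Finset.Icc 1 (2 * m), (n a : ℝ) ≤ (t : ℝ) - 1)
    (hsum : ∑ a ∈ Finset.Icc 1 (2 * m), (n a : ℝ) = (m : ℝ) * ((t : ℝ) - 1))
    (hmany : 0.9995 * (m : ℝ)
      ≤ ((G.filter (fun a => (t : ℝ) - 1 - (1 / 10 ^ 6 : ℝ) * T < (n a : ℝ))).card : ℝ)) :
    0.92 * (m : ℝ)
      < (((Finset.Icc 1 (2 * m) \ G).filter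
          (fun b => (n b : ℝ) ≤ (t : ℝ) - 1 - (15 / 16 : ℝ) * T)).card : ℝ) := by
  have hT' : (0:ℝ) < T := by exact_mod_cast hT
  have htT : (t:ℝ) - 1 ≤ T := by
    have : (t:ℝ) ≤ T := Nat.cast_le.mpr htup
    linarith
  have hc1pos : (0:ℝ) ≤ (t:ℝ) - 1 - (1/10^6) * T := by nlinarith
  have hc2pos : (0:ℝ) < (t:ℝ) - 1 - (15/16) * T := by nlinarith
  have hScard : (Finset.Icc 1 (2*m)).card = 2*m := by simp
  have hSGcard : (Finset.Icc 1 (2*m) \ G).card = m := by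
    rw [card_sdiff_of_subset hGsub, hScard, hGcard]; omega
  -- sum over G lower bound
  have hsumG : 0.9995 * (m:ℝ) * ((t:ℝ)-1 - (1/10^6)*T) ≤ ∑ a ∈ G, (n a : ℝ) := by
    set F := G.filter (fun a => (t : ℝ) - 1 - (1 / 10 ^ 6 : ℝ) * T < (n a : ℝ)) with hF
    have h1 : (F.card : ℝ) * ((t:ℝ)-1 - (1/10^6)*T) ≤ ∑ a ∈ F, (n a : ℝ) := by
      have := Finset.card_nsmul_le_sum F (fun a => (n a : ℝ)) ((t:ℝ)-1 - (1/10^6)*T)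
        (fun a ha => le_of_lt (mem_filter.mp ha).2)
      simpa [nsmul_eq_mul] using this
    have h2 : ∑ a ∈ F, (n a : ℝ) ≤ ∑ a ∈ G, (n a : ℝ) :=
      Finset.sum_le_sum_of_subset_of_nonneg (filter_subset _ _)
        (fun _ _ _ => Nat.cast_nonneg _)
    nlinarith
  -- split sum
  have hsplit : ∑ a ∈ Finset.Icc 1 (2*m) \ G, (n a : ℝ) + ∑ a ∈ G, (n a : ℝ)
      = (m : ℝ) * ((t : ℝ) - 1) := by
    rw [Finset.sum_sdiff hGsub]; exact hsum
  -- bad suboptimal arms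
  set B := (Finset.Icc 1 (2*m) \ G).filter
      (fun b => ¬ ((n b:ℝ) ≤ (t:ℝ)-1-(15/16)*T)) with hB
  have hBsum : (B.card : ℝ) * ((t:ℝ)-1-(15/16)*T) ≤ ∑ a ∈ Finset.Icc 1 (2*m) \ G, (n a : ℝ) := by
    have h1 : (B.card : ℝ) * ((t:ℝ)-1-(15/16)*T) ≤ ∑ a ∈ B, (n a : ℝ) := by
      have := Finset.card_nsmul_le_sum B (fun a => (n a : ℝ)) ((t:ℝ)-1-(15/16)*T)
        (fun a ha => le_of_lt (lt_of_not_ge (mem_filter.mp ha).2))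
      simpa [nsmul_eq_mul] using this
    have h2 : ∑ a ∈ B, (n a : ℝ) ≤ ∑ a ∈ Finset.Icc 1 (2*m) \ G, (n a : ℝ) :=
      Finset.sum_le_sum_of_subset_of_nonneg (filter_subset _ _)
        (fun _ _ _ => Nat.cast_nonneg _)
    linarith
  have hcards : ((Finset.Icc 1 (2*m) \ G).filter
      (fun b => (n b:ℝ) ≤ (t:ℝ)-1-(15/16)*T)).card + B.card = m := by
    rw [hB, Finset.card_filter_add_card_filter_not, hSGcard]
  have hkey : (B.card : ℝ) * ((t:ℝ)-1-(15/16)*T)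
      ≤ (m:ℝ) * ((t:ℝ)-1) - 0.9995 * (m:ℝ) * ((t:ℝ)-1 - (1/10^6)*T) := by linarith
  have hBnn : (0:ℝ) ≤ (B.card : ℝ) := Nat.cast_nonneg _
  have hm' : (0:ℝ) < m := by exact_mod_cast hm
  have hBsmall : (B.card : ℝ) < 0.08 * m := by nlinarith [mul_pos hm' hT']
  have : ((((Finset.Icc 1 (2*m) \ G).filter
      (fun b => (n b:ℝ) ≤ (t:ℝ)-1-(15/16)*T)).card : ℝ)) = (m:ℝ) - B.card := by
    have := congrArg (fun k : ℕ => (k:ℝ)) hcards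
    push_cast at this
    linarith
  rw [this]; linarith
end

section
/- Let m ≥ 1 and T ≥ 2 be integers, let c₁ := 10⁻⁶, c₂ := 15/16, α := 255/256 + c₁, N := 2m, and Δ := √(N·ln(T)/(10⁴·m·T)). Let t be an integer with α·T + 1 ≤ t ≤ T and let w be a real number with 1/(2√2) ≤ w ≤ 1/2. Then: (i) for every integer n_a with t − 1 − c₁·T < n_a ≤ t − 1, one has Δ + w·√(ln(t)/(n_a + 1)) < Δ + 100·(1/2)·Δ = 51·Δ; (ii) for every integer n_b with 0 ≤ n_b ≤ t − 1 − c₂·T, one has w·√(ln(t)/(n_b + 1)) ≥ 100·√6·(1/(2√2))·Δ = 50·√3·Δ; and consequently Δ + w·√(ln(t)/(n_a + 1)) < w·√(ln(t)/(n_b + 1)). -/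
open Finset

private lemma csqrt (c X : ℝ) (hc : 0 ≤ c) :
    c * Real.sqrt X = Real.sqrt (c ^ 2 * X) := by
  rw [Real.sqrt_mul (sq_nonneg c), Real.sqrt_sq hc]

/-- index comparison, CL-SG lower bound. With `N = 2m`,
`Δ = √(N ln T/(10⁴ m T))`, `c₁ = 10⁻⁶`, `c₂ = 15/16`, `α = 255/256 + c₁`,
an integer round `α·T + 1 ≤ t ≤ T` and a shared seed `w ∈ [1/(2√2), 1/2]`:
(i) every sufficiently observed optimal arm (`t − 1 − c₁·T < n_a ≤ t − 1`) has index
`Δ + w·√(ln t/(n_a+1)) < Δ + 100·(1/2)·Δ = 51·Δ`;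
(ii) every insufficiently observed suboptimal arm (`n_b ≤ t − 1 − c₂·T`) has index
`w·√(ln t/(n_b+1)) ≥ 100·√6·(1/(2√2))·Δ = 50·√3·Δ`;
and consequently the former index is strictly smaller than the latter. -/
theorem stmt18 (m T : ℕ) (hm : 1 ≤ m) (hT : 2 ≤ T)
    (t : ℕ) (htlow : ((255 / 256 : ℝ) + 1 / 10 ^ 6) * T + 1 ≤ (t : ℝ)) (htup : t ≤ T)
    (w : ℝ) (hw1 : 1 / (2 * Real.sqrt 2) ≤ w) (hw2 : w ≤ 1 / 2)
    (Δ : ℝ) (hΔ : Δ = Real.sqrt ((2 * m : ℝ) * Real.log T / (10 ^ 4 * m * T))) :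
    (∀ na : ℕ, (t : ℝ) - 1 - (1 / 10 ^ 6 : ℝ) * T < (na : ℝ) → (na : ℝ) ≤ (t : ℝ) - 1 →
      Δ + w * Real.sqrt (Real.log t / ((na : ℝ) + 1)) < Δ + 100 * (1 / 2) * Δ) ∧
    (Δ + 100 * (1 / 2) * Δ = 51 * Δ) ∧
    (∀ nb : ℕ, (nb : ℝ) ≤ (t : ℝ) - 1 - (15 / 16 : ℝ) * T →
      100 * Real.sqrt 6 * (1 / (2 * Real.sqrt 2)) * Δ
        ≤ w * Real.sqrt (Real.log t / ((nb : ℝ) + 1))) ∧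
    (100 * Real.sqrt 6 * (1 / (2 * Real.sqrt 2)) * Δ = 50 * Real.sqrt 3 * Δ) ∧
    (∀ na nb : ℕ, (t : ℝ) - 1 - (1 / 10 ^ 6 : ℝ) * T < (na : ℝ) → (na : ℝ) ≤ (t : ℝ) - 1 →
      (nb : ℝ) ≤ (t : ℝ) - 1 - (15 / 16 : ℝ) * T →
      Δ + w * Real.sqrt (Real.log t / ((na : ℝ) + 1))
        < w * Real.sqrt (Real.log t / ((nb : ℝ) + 1))) := by
  have hs2 : (0:ℝ) < Real.sqrt 2 := Real.sqrt_pos.mpr (by norm_num)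
  have hm' : (0:ℝ) < m := by exact_mod_cast hm
  have hT' : (2:ℝ) ≤ T := by exact_mod_cast hT
  have hTpos : (0:ℝ) < T := by linarith
  have hL : 0 < Real.log T := Real.log_pos (by linarith)
  have htT' : (t:ℝ) ≤ T := by exact_mod_cast htup
  rw [add_mul] at htlow
  have htpos : (0:ℝ) < t := by nlinarith
  have hΔ' : Δ = Real.sqrt (Real.log T / (5000 * T)) := by
    rw [hΔ]; congr 1
    field_simp
    ring
  have hΔpos : 0 < Δ := by
    rw [hΔ']; exact Real.sqrt_pos.mpr (by positivity)
  have hwpos : 0 < w := lt_of_lt_of_le (by positivity) hw1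
  have htT : Real.log t ≤ Real.log T := Real.log_le_log htpos htT'
  -- log t ≥ (3/4) log T
  have hlog34 : (3/4) * Real.log T ≤ Real.log t := by
    have hα0 : (0:ℝ) < 255/256 + 1/10^6 := by norm_num
    have h1 : Real.log ((255/256 + 1/10^6 : ℝ) * T) ≤ Real.log t := by
      apply Real.log_le_log (by positivity)
      rw [add_mul]; linarith
    rw [Real.log_mul (ne_of_gt hα0) (ne_of_gt hTpos)] at h1
    have h2 : -(1/4) * Real.log 2 ≤ Real.log (255/256 + 1/10^6 : ℝ) := by
      have h0 : (0:ℝ) ≤ Real.log ((255/256 + 1/10^6 : ℝ)^4 * 2) :=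
        Real.log_nonneg (by norm_num)
      rw [Real.log_mul (by positivity) (by norm_num), Real.log_pow] at h0
      push_cast at h0
      linarith
    have h3 : Real.log 2 ≤ Real.log T := Real.log_le_log (by norm_num) hT'
    have h2' : Real.log 2 ≥ 0 := Real.log_nonneg (by norm_num)
    linarith
  have hlogt0 : 0 ≤ Real.log t := by linarith
  have q14 : Real.sqrt (1/4 : ℝ) = 1/2 := by
    rw [show (1/4:ℝ) = (1/2)^2 by norm_num, Real.sqrt_sq (by norm_num)]
  -- Part (i)
  have parti : ∀ na : ℕ, (t : ℝ) - 1 - (1 / 10 ^ 6 : ℝ) * T < (na : ℝ) → (na : ℝ) ≤ (t : ℝ) - 1 →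
      Δ + w * Real.sqrt (Real.log t / ((na : ℝ) + 1)) < Δ + 100 * (1 / 2) * Δ := by
    intro na hna1 _
    have hden : ((255:ℝ)/256) * T < (na:ℝ) + 1 := by linarith
    have key : w * Real.sqrt (Real.log t / ((na : ℝ) + 1)) < 50 * Δ := by
      calc w * Real.sqrt (Real.log t / ((na : ℝ) + 1))
          ≤ (1/2) * Real.sqrt (Real.log t / ((na : ℝ) + 1)) :=
            mul_le_mul_of_nonneg_right hw2 (Real.sqrt_nonneg _)
        _ = Real.sqrt ((1/4) * (Real.log t / ((na : ℝ) + 1))) := by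
            rw [Real.sqrt_mul (by norm_num), q14]
        _ < Real.sqrt (2500 * (Real.log T / (5000 * T))) := by
            apply Real.sqrt_lt_sqrt (by positivity)
            calc (1/4:ℝ) * (Real.log t / ((na:ℝ)+1))
                ≤ (1/4:ℝ) * (Real.log T / ((255/256:ℝ)*T)) := by
                  apply mul_le_mul_of_nonneg_left _ (by norm_num)
                  exact div_le_div₀ hL.le htT (by positivity) hden.le
              _ < 2500 * (Real.log T / (5000*T)) := by
                  rw [← mul_div_assoc, ← mul_div_assoc,
                    div_lt_div_iff₀ (by positivity) (by positivity)]
                  nlinarith [mul_pos hTpos hL]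
        _ = 50 * Δ := by
            rw [hΔ', csqrt 50 _ (by norm_num)]
            norm_num
    linarith
  -- Part (iii)
  have partiv : 100 * Real.sqrt 6 * (1 / (2 * Real.sqrt 2)) * Δ = 50 * Real.sqrt 3 * Δ := by
    have h6 : Real.sqrt 6 = Real.sqrt 2 * Real.sqrt 3 := by
      rw [show (6:ℝ) = 2*3 by norm_num, Real.sqrt_mul (by norm_num)]
    rw [h6]
    field_simp
    ring
  have partiii : ∀ nb : ℕ, (nb : ℝ) ≤ (t : ℝ) - 1 - (15 / 16 : ℝ) * T →
      100 * Real.sqrt 6 * (1 / (2 * Real.sqrt 2)) * Δ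
        ≤ w * Real.sqrt (Real.log t / ((nb : ℝ) + 1)) := by
    intro nb hnb
    rw [partiv]
    have hnbT : (nb:ℝ) + 1 ≤ T/16 := by linarith
    have c1 : ((50:ℝ) * Real.sqrt 3)^2 = 7500 := by
      rw [mul_pow, Real.sq_sqrt (by norm_num : (0:ℝ) ≤ 3)]; norm_num
    have c2 : ((1:ℝ)/(2*Real.sqrt 2))^2 = 1/8 := by
      rw [div_pow, mul_pow, Real.sq_sqrt (by norm_num : (0:ℝ) ≤ 2)]; norm_num
    calc 50 * Real.sqrt 3 * Δ
        = Real.sqrt ((50 * Real.sqrt 3)^2 * (Real.log T / (5000 * T))) := by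
          rw [hΔ', csqrt _ _ (by positivity)]
      _ ≤ Real.sqrt ((1/8) * (Real.log t / ((nb:ℝ)+1))) := by
          apply Real.sqrt_le_sqrt
          rw [c1]
          have h1 : (3/4) * Real.log T / ((T:ℝ)/16) ≤ Real.log t / ((nb:ℝ)+1) :=
            div_le_div₀ hlogt0 hlog34 (by positivity) hnbT
          have := mul_le_mul_of_nonneg_left h1 (show (0:ℝ) ≤ 1/8 by norm_num)
          calc (7500:ℝ) * (Real.log T / (5000*T))
              = (1/8) * ((3/4) * Real.log T / ((T:ℝ)/16)) := by
                field_simp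
                ring
            _ ≤ (1/8) * (Real.log t / ((nb:ℝ)+1)) := this
      _ = (1/(2*Real.sqrt 2)) * Real.sqrt (Real.log t / ((nb:ℝ)+1)) := by
          rw [csqrt _ _ (by positivity), c2]
      _ ≤ w * Real.sqrt (Real.log t / ((nb:ℝ)+1)) :=
          mul_le_mul_of_nonneg_right hw1 (Real.sqrt_nonneg _)
  refine ⟨parti, by ring, partiii, partiv, ?_⟩
  intro na nb hna1 hna2 hnb
  have ha := parti na hna1 hna2
  have hb := partiii nb hnb
  rw [partiv] at hb
  have h51 : (51:ℝ) ≤ 50 * Real.sqrt 3 := by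
    have : (51/50:ℝ) ≤ Real.sqrt 3 := by
      rw [show (51/50:ℝ) = Real.sqrt ((51/50)^2) from
        (Real.sqrt_sq (by norm_num)).symm]
      exact Real.sqrt_le_sqrt (by norm_num)
    linarith
  have h51' : 51 * Δ ≤ 50 * Real.sqrt 3 * Δ :=
    mul_le_mul_of_nonneg_right h51 hΔpos.le
  linarith
end
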